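/- In the group algebra ℤ[B_n], the product Ψ_1 Ψ_2 ⋯ Ψ_n equals the sum of all elements of B_n, where Ψ_1 = 1 + s_0 and Ψ_i = 1 + s_{i-1}·Ψ_{i-1} + s_{i-1}⋯s_1 s_0 s_1⋯s_{i-1} for i > 1. -/

import Mathlib

/-- The signed transposition `t_{ij}` of `ℤ`, exchanging `i ↔ j` and `-i ↔ -j`
(when `i = -j` this is the sign change negating `j`). -/
def bt (i j : ℤ) : Equiv.Perm ℤ :=
  if i = -j then Equiv.swap i j else Equiv.swap i j * Equiv.swap (-i) (-j)

/-- `w` is a signed permutation in the hyperoctahedral group `B_n`. -/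
def IsSignedPerm (n : ℕ) (w : Equiv.Perm ℤ) : Prop :=
  (∀ x : ℤ, w (-x) = -w x) ∧ ∀ x : ℤ, (n : ℤ) < |x| → w x = x

/-- The simple generators of type B: `s_0 = (-1, 1)` (sign change in position 1) and
`s_i = (i, i+1)` for `i ≥ 1`. -/
def sB : ℕ → Equiv.Perm ℤ
  | 0 => bt (-1) 1
  | i + 1 => bt (i + 1) (i + 2)

/-- `c_i = s_{i-1}⋯s_1 s_0 s_1⋯s_{i-1}`. -/
def cB : ℕ → Equiv.Perm ℤ
  | 0 => 1
  | 1 => sB 0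
  | i + 2 => sB (i + 1) * cB (i + 1) * sB (i + 1)

/-- `Ψ_i ∈ ℤ[B_n]`: `Ψ_1 = 1 + s_0` and
`Ψ_i = 1 + s_{i-1}·Ψ_{i-1} + s_{i-1}⋯s_1 s_0 s_1⋯s_{i-1}` for `i > 1`. -/
noncomputable def psiB : ℕ → MonoidAlgebra ℤ (Equiv.Perm ℤ)
  | 0 => 1
  | 1 => 1 + MonoidAlgebra.of ℤ (Equiv.Perm ℤ) (sB 0)
  | i + 2 =>
      1 + MonoidAlgebra.of ℤ (Equiv.Perm ℤ) (sB (i + 1)) * psiB (i + 1) +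
        MonoidAlgebra.of ℤ (Equiv.Perm ℤ) (cB (i + 2))


/-!
Let `T_n` be the list of terms of `Ψ_n`. By the recursion, `c_n⁻¹` sends `n` to `-n` and left
multiplication by `s_{n-1}` turns `r⁻¹ (n - 1)` into `(s_{n-1} r)⁻¹ n`, so `r ↦ r⁻¹ n` maps
`T_n` bijectively onto `{±1, …, ±n}`. Since `w⁻¹ n` is constant on right cosets of `B_{n-1}`
in `B_n` and takes each of these values on exactly one of them, `T_n` is a system of right
coset representatives: every `w ∈ B_n` factors uniquely as `u r` with `u ∈ B_{n-1}` and
`r ∈ T_n`. Hence `Ψ_1 ⋯ Ψ_n = (∑ B_{n-1}) Ψ_n = ∑ B_n` by induction.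
-/

open Equiv

lemma List.sum_map_product_mul {α β R : Type*} [NonUnitalNonAssocSemiring R] (f : α → R)
    (g : β → R) (l₁ : List α) (l₂ : List β) :
    ((l₁ ×ˢ l₂).map fun p => f p.1 * g p.2).sum = (l₁.map f).sum * (l₂.map g).sum := by
  induction l₁ with
  | nil => simp
  | cons a l ih => simp [List.product_cons, Function.comp_def, List.sum_map_mul_left, ih, add_mul]

namespace IsSignedPerm

variable {n : ℕ} {u v w : Perm ℤ}

lemma one (n : ℕ) : IsSignedPerm n 1 := ⟨fun _ => rfl, fun _ _ => rfl⟩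

lemma mul (hu : IsSignedPerm n u) (hv : IsSignedPerm n v) : IsSignedPerm n (u * v) :=
  ⟨fun x => by simp only [Perm.mul_apply, hv.1, hu.1],
    fun x hx => by simp only [Perm.mul_apply, hv.2 x hx, hu.2 x hx]⟩

lemma inv (hw : IsSignedPerm n w) : IsSignedPerm n w⁻¹ :=
  ⟨fun x => by rw [Perm.inv_eq_iff_eq, hw.1]; simp,
    fun x hx => by rw [Perm.inv_eq_iff_eq, hw.2 x hx]⟩

lemma mono {m : ℕ} (h : m ≤ n) (hw : IsSignedPerm m w) : IsSignedPerm n w :=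
  ⟨hw.1, fun x hx => hw.2 x (lt_of_le_of_lt (by exact_mod_cast h) hx)⟩

lemma apply_zero (hw : IsSignedPerm n w) : w 0 = 0 := by
  have h := hw.1 0
  rw [neg_zero] at h
  omega

lemma apply_ne_zero (hw : IsSignedPerm n w) {x : ℤ} (hx : x ≠ 0) : w x ≠ 0 :=
  fun h => hx (w.injective (h.trans hw.apply_zero.symm))

lemma abs_apply_le (hw : IsSignedPerm n w) {x : ℤ} (hx : |x| ≤ n) : |w x| ≤ n := by
  by_contra! h
  have hfix : w x = x := w.injective (hw.2 _ h)
  rw [hfix] at h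
  exact h.not_ge hx

lemma eq_one_of_zero (hw : IsSignedPerm 0 w) : w = 1 := by
  ext x
  rcases eq_or_ne x 0 with rfl | hx
  · exact hw.apply_zero
  · exact hw.2 x (by simpa using hx)

lemma of_apply_succ (hw : IsSignedPerm (n + 1) w) (h : w (n + 1 : ℕ) = (n + 1 : ℕ)) :
    IsSignedPerm n w := by
  refine ⟨hw.1, fun x hx => ?_⟩
  rcases lt_or_ge ((n + 1 : ℕ) : ℤ) |x| with hlt | hle
  · exact hw.2 x hlt
  · have hx' : x = (n + 1 : ℕ) ∨ x = -(n + 1 : ℕ) := by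
      rw [lt_abs] at hx; rw [abs_le] at hle; push_cast at hx hle ⊢; omega
    rcases hx' with rfl | rfl
    · exact h
    · rw [hw.1, h]

lemma mul_inv_apply_succ (hu : IsSignedPerm n u) (r : Perm ℤ) :
    (u * r)⁻¹ (n + 1 : ℕ) = r⁻¹ (n + 1 : ℕ) := by
  rw [mul_inv_rev, Perm.mul_apply, hu.inv.2 _ (by rw [abs_of_pos (by omega)]; omega)]

end IsSignedPerm

lemma isSignedPerm_swap_neg_self {n : ℕ} {k : ℤ} (hk : |k| ≤ n) :
    IsSignedPerm n (swap (-k) k) := by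
  rw [abs_le] at hk
  refine ⟨fun x => ?_, fun x hx => ?_⟩
  · simp only [swap_apply_def]; split_ifs <;> omega
  · rw [lt_abs] at hx
    exact swap_apply_of_ne_of_ne (by omega) (by omega)

lemma sB_succ_apply (i : ℕ) (x : ℤ) :
    sB (i + 1) x =
      if x = (i + 1 : ℤ) then (i + 2 : ℤ) else if x = (i + 2 : ℤ) then (i + 1 : ℤ)
      else if x = -(i + 1 : ℤ) then -(i + 2 : ℤ) else if x = -(i + 2 : ℤ) then -(i + 1 : ℤ)
      else x := by
  rw [sB, bt, if_neg (by omega), Perm.mul_apply, swap_apply_def, swap_apply_def]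
  split_ifs <;> omega

lemma sB_succ_inv (i : ℕ) : (sB (i + 1))⁻¹ = sB (i + 1) := by
  refine inv_eq_of_mul_eq_one_left (Perm.ext fun x => ?_)
  rw [Perm.mul_apply, sB_succ_apply, sB_succ_apply, Perm.one_apply]
  split_ifs <;> omega

lemma cB_eq_swap : ∀ n : ℕ, cB n = swap (-(n : ℤ)) n
  | 0 => by simp [cB]; rfl
  | 1 => by simp [cB, sB, bt]
  | n + 2 => by
    have h₁ : sB (n + 1) (-((n + 1 : ℕ) : ℤ)) = -((n + 2 : ℕ) : ℤ) := by
      rw [sB_succ_apply]; push_cast; split_ifs <;> omega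
    have h₂ : sB (n + 1) ((n + 1 : ℕ) : ℤ) = ((n + 2 : ℕ) : ℤ) := by
      rw [sB_succ_apply]; push_cast; split_ifs <;> omega
    rw [cB, cB_eq_swap (n + 1), ← h₁, ← h₂, swap_apply_apply, sB_succ_inv]

lemma isSignedPerm_cB (n : ℕ) : IsSignedPerm n (cB n) := by
  rw [cB_eq_swap]
  exact isSignedPerm_swap_neg_self (by simp)

lemma isSignedPerm_sB : ∀ n : ℕ, IsSignedPerm (n + 1) (sB n)
  | 0 => isSignedPerm_cB 1
  | i + 1 => by
    refine ⟨fun x => ?_, fun x hx => ?_⟩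
    · rw [sB_succ_apply, sB_succ_apply]; split_ifs <;> omega
    · rw [lt_abs] at hx; push_cast at hx
      rw [sB_succ_apply]; split_ifs <;> omega

def signedRange : ℕ → List ℤ
  | 0 => []
  | n + 1 => ((n + 1 : ℕ) : ℤ) :: (signedRange n ++ [-((n + 1 : ℕ) : ℤ)])

lemma mem_signedRange {n : ℕ} {k : ℤ} : k ∈ signedRange n ↔ k ≠ 0 ∧ |k| ≤ n := by
  induction n with
  | zero => simp [signedRange]
  | succ n ih =>
    simp only [signedRange, List.mem_cons, List.mem_append, List.not_mem_nil, or_false, ih, abs_le]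
    push_cast
    omega

lemma nodup_signedRange : ∀ n : ℕ, (signedRange n).Nodup
  | 0 => List.nodup_nil
  | n + 1 => by
    refine List.nodup_cons.mpr ⟨?_, (nodup_signedRange n).append (List.nodup_singleton _) ?_⟩
    · simp only [List.mem_append, List.mem_singleton, mem_signedRange, abs_le]
      push_cast
      omega
    · simp only [List.disjoint_singleton, mem_signedRange, abs_le]
      push_cast
      omega

/-- The terms of `Ψ_n` for `n ≥ 1`; starting from `[]` instead of `Ψ_0 = 1` makes the recursion
uniform. -/
def psiTerms : ℕ → List (Perm ℤ)
  | 0 => []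
  | n + 1 => 1 :: ((psiTerms n).map (sB n * ·) ++ [cB (n + 1)])

lemma psiB_succ_eq_sum (n : ℕ) :
    psiB (n + 1) = ((psiTerms (n + 1)).map (MonoidAlgebra.of ℤ (Perm ℤ))).sum := by
  induction n with
  | zero => simp [psiB, psiTerms, cB, MonoidAlgebra.one_def]
  | succ n ih =>
    rw [psiB, ih, psiTerms.eq_2 (n + 1)]
    simp only [List.map_cons, List.map_append, List.map_map, Function.comp_def, map_mul, map_one,
      List.sum_cons, List.sum_append, List.sum_map_mul_left, List.map_nil, List.sum_nil, add_zero,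
      add_assoc]

lemma isSignedPerm_of_mem_psiTerms {n : ℕ} {r : Perm ℤ} (hr : r ∈ psiTerms n) :
    IsSignedPerm n r := by
  induction n generalizing r with
  | zero => cases hr
  | succ n ih =>
    simp only [psiTerms, List.mem_cons, List.mem_append, List.mem_map, List.not_mem_nil,
      or_false] at hr
    rcases hr with rfl | ⟨t, ht, rfl⟩ | rfl
    · exact IsSignedPerm.one _
    · exact (isSignedPerm_sB n).mul ((ih ht).mono n.le_succ)
    · exact isSignedPerm_cB _

lemma map_inv_apply_psiTerms (n : ℕ) :
    (psiTerms n).map (fun r => r⁻¹ n) = signedRange n := by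
  induction n with
  | zero => rfl
  | succ n ih =>
    have hshift : ∀ t ∈ psiTerms n, (sB n * t)⁻¹ (n + 1 : ℕ) = t⁻¹ n := by
      rcases n with _ | m
      · simp [psiTerms]
      · have hs : sB (m + 1) (m + 1 + 1 : ℕ) = (m + 1 : ℕ) := by
          rw [sB_succ_apply]; push_cast; split_ifs <;> omega
        intro t _
        rw [mul_inv_rev, Perm.mul_apply, sB_succ_inv, hs]
    have hc : (cB (n + 1))⁻¹ (n + 1 : ℕ) = -((n + 1 : ℕ) : ℤ) := by
      rw [cB_eq_swap, swap_inv, swap_apply_right]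
    simp only [psiTerms, List.map_cons, List.map_append, List.map_map, Function.comp_def,
      List.map_congr_left hshift, ih, inv_one, Perm.one_apply, hc]
    rfl

lemma nodup_psiTerms (n : ℕ) : (psiTerms n).Nodup :=
  List.Nodup.of_map _ (map_inv_apply_psiTerms n ▸ nodup_signedRange n)

lemma eq_of_mul_eq_mul_of_mem_psiTerms {n : ℕ} {u₁ u₂ r₁ r₂ : Perm ℤ}
    (hu₁ : IsSignedPerm n u₁) (hu₂ : IsSignedPerm n u₂) (hr₁ : r₁ ∈ psiTerms (n + 1))
    (hr₂ : r₂ ∈ psiTerms (n + 1)) (h : u₁ * r₁ = u₂ * r₂) : u₁ = u₂ ∧ r₁ = r₂ := by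
  have hval : r₁⁻¹ (n + 1 : ℕ) = r₂⁻¹ (n + 1 : ℕ) := by
    rw [← hu₁.mul_inv_apply_succ, h, hu₂.mul_inv_apply_succ]
  have hnodup : ((psiTerms (n + 1)).map fun r => r⁻¹ (n + 1 : ℕ)).Nodup := by
    rw [map_inv_apply_psiTerms]
    exact nodup_signedRange _
  obtain rfl : r₁ = r₂ := List.inj_on_of_nodup_map hnodup hr₁ hr₂ hval
  exact ⟨mul_right_cancel h, rfl⟩

lemma exists_mul_eq_of_isSignedPerm_succ {n : ℕ} {w : Perm ℤ} (hw : IsSignedPerm (n + 1) w) :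
    ∃ u, IsSignedPerm n u ∧ ∃ r ∈ psiTerms (n + 1), u * r = w := by
  have hk : w⁻¹ (n + 1 : ℕ) ∈ signedRange (n + 1) :=
    mem_signedRange.mpr
      ⟨hw.inv.apply_ne_zero (by omega), hw.inv.abs_apply_le (abs_of_nonneg (by omega)).le⟩
  rw [← map_inv_apply_psiTerms, List.mem_map] at hk
  obtain ⟨r, hr, hrw⟩ := hk
  refine ⟨w * r⁻¹, (hw.mul (isSignedPerm_of_mem_psiTerms hr).inv).of_apply_succ ?_, r, hr,
    inv_mul_cancel_right w r⟩
  rw [Perm.mul_apply, hrw]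
  simp

def signedPermList : ℕ → List (Perm ℤ)
  | 0 => [1]
  | n + 1 => (signedPermList n ×ˢ psiTerms (n + 1)).map fun p => p.1 * p.2

lemma mem_signedPermList {n : ℕ} {w : Perm ℤ} : w ∈ signedPermList n ↔ IsSignedPerm n w := by
  induction n generalizing w with
  | zero =>
    simp only [signedPermList, List.mem_singleton]
    exact ⟨fun h => h ▸ IsSignedPerm.one 0, IsSignedPerm.eq_one_of_zero⟩
  | succ n ih =>
    simp only [signedPermList, List.mem_map, Prod.exists, List.mem_product, ih]
    constructor
    · rintro ⟨u, r, ⟨hu, hr⟩, rfl⟩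
      exact (hu.mono n.le_succ).mul (isSignedPerm_of_mem_psiTerms hr)
    · intro hw
      obtain ⟨u, hu, r, hr, rfl⟩ := exists_mul_eq_of_isSignedPerm_succ hw
      exact ⟨u, r, ⟨hu, hr⟩, rfl⟩

lemma nodup_signedPermList : ∀ n : ℕ, (signedPermList n).Nodup
  | 0 => List.nodup_singleton 1
  | n + 1 => ((nodup_signedPermList n).product (nodup_psiTerms (n + 1))).map_on
      fun ⟨_, _⟩ h₁ ⟨_, _⟩ h₂ h => by
        simp only [List.mem_product, mem_signedPermList] at h₁ h₂
        obtain ⟨rfl, rfl⟩ := eq_of_mul_eq_mul_of_mem_psiTerms h₁.1 h₂.1 h₁.2 h₂.2 h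
        rfl

lemma prod_psiB_eq_sum (n : ℕ) :
    ((List.range n).map fun i => psiB (i + 1)).prod =
      ((signedPermList n).map (MonoidAlgebra.of ℤ (Perm ℤ))).sum := by
  induction n with
  | zero => simp [signedPermList, MonoidAlgebra.one_def]
  | succ n ih =>
    rw [List.range_succ, List.map_append, List.prod_append, ih, List.map_singleton,
      List.prod_singleton, psiB_succ_eq_sum, ← List.sum_map_product_mul, signedPermList,
      List.map_map]
    simp only [Function.comp_def, map_mul]

/-- In `ℤ[B_n]`, `Ψ_1 Ψ_2 ⋯ Ψ_n` equals the sum of all elements of `B_n`. -/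
theorem psi_factorization_B (n : ℕ) :
    ((List.range n).map fun i => psiB (i + 1)).prod =
      ∑ᶠ w ∈ {w : Equiv.Perm ℤ | IsSignedPerm n w},
        MonoidAlgebra.of ℤ (Equiv.Perm ℤ) w := by
  classical
  have hset : {w : Perm ℤ | IsSignedPerm n w} = ↑(signedPermList n).toFinset := by
    ext w
    simp [mem_signedPermList]
  rw [hset, finsum_mem_coe_finset, List.sum_toFinset _ (nodup_signedPermList n),
    prod_psiB_eq_sum]
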